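/- Let n ≥ 3 be an integer and let h : {1,…,n}³ → ℝ, written h_{ijk}, be totally symmetric, i.e., h_{ijk} is invariant under every permutation of the indices i, j, k. Then Σ_{r=1}^{n} Σ_{1≤i<j≤n} ( h_{rii}h_{rjj} − (h_{rij})² ) − (1/(n−1)) Σ_{r=1}^{n} Σ_{j=2}^{n} ( h_{r11}h_{rjj} − (h_{r1j})² ) ≤ ((3n−1)(n−2)/(2(3n+5)(n−1))) · Σ_{r=1}^{n} ( Σ_{i=1}^{n} h_{rii} )². -/

import Mathlib

open Finset

private lemma pairs_half {m : ℕ} (t : Fin m → ℝ) (w : Fin m → Fin m → ℝ)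
    (hsym : ∀ i j, w i j = w j i) (hdiag : ∀ i, w i i = t i) :
    ∑ i : Fin m, ∑ j : Fin m, (if i < j then t i * t j - w i j ^ 2 else 0)
      = ((∑ i : Fin m, t i) ^ 2 - ∑ i : Fin m, ∑ j : Fin m, w i j ^ 2) / 2 := by
  have key : ∀ i j : Fin m, t i * t j - w i j ^ 2
      = (if i < j then t i * t j - w i j ^ 2 else 0)
        + (if j < i then t i * t j - w i j ^ 2 else 0) := by
    intro i j
    rcases lt_trichotomy i j with hlt | heq | hgt
    · simp [hlt, asymm hlt]
    · subst heq
      rw [if_neg (lt_irrefl i), hdiag i]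
      ring
    · simp [asymm hgt, hgt]
  have swap : (∑ i : Fin m, ∑ j : Fin m, (if j < i then t i * t j - w i j ^ 2 else 0))
      = ∑ i : Fin m, ∑ j : Fin m, (if i < j then t i * t j - w i j ^ 2 else 0) := by
    rw [Finset.sum_comm]
    refine Finset.sum_congr rfl fun a _ => Finset.sum_congr rfl fun b _ => ?_
    rw [hsym b a, mul_comm (t b) (t a)]
  have expand2 : (∑ i : Fin m, ∑ j : Fin m, (t i * t j - w i j ^ 2))
      = (∑ i : Fin m, ∑ j : Fin m, (if i < j then t i * t j - w i j ^ 2 else 0))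
        + ∑ i : Fin m, ∑ j : Fin m, (if j < i then t i * t j - w i j ^ 2 else 0) := by
    rw [← Finset.sum_add_distrib]
    refine Finset.sum_congr rfl fun i _ => ?_
    rw [← Finset.sum_add_distrib]
    exact Finset.sum_congr rfl fun j _ => key i j
  have expand1 : (∑ i : Fin m, ∑ j : Fin m, (t i * t j - w i j ^ 2))
      = (∑ i : Fin m, t i) ^ 2 - ∑ i : Fin m, ∑ j : Fin m, w i j ^ 2 := by
    rw [pow_two, Finset.sum_mul_sum, ← Finset.sum_sub_distrib]
    exact Finset.sum_congr rfl fun i _ => Finset.sum_sub_distrib _ _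
  linarith [expand1, expand2, swap]

private lemma sum_erase_swap {ι : Type*} [DecidableEq ι] (s : Finset ι) (F : ι → ι → ℝ) :
    ∑ a ∈ s, ∑ b ∈ s.erase a, F a b = ∑ a ∈ s, ∑ b ∈ s.erase a, F b a := by
  have h1 : ∀ G : ι → ι → ℝ, (∑ a ∈ s, ∑ b ∈ s.erase a, G a b)
      = (∑ a ∈ s, ∑ b ∈ s, G a b) - ∑ a ∈ s, G a a := by
    intro G
    rw [← Finset.sum_sub_distrib]
    exact Finset.sum_congr rfl fun a ha => Finset.sum_erase_eq_sub ha
  rw [h1, h1, Finset.sum_comm]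

private lemma sum_shift_sq {ι : Type*} (s : Finset ι) (f : ι → ℝ) (c C MM : ℝ)
    (hc : (s.card : ℝ) = C) (hsum : ∑ x ∈ s, f x = c) :
    ∑ x ∈ s, (MM * f x - c) ^ 2
      = MM ^ 2 * (∑ x ∈ s, f x ^ 2) - (2 * MM - C) * c ^ 2 := by
  have key : ∀ x ∈ s, (MM * f x - c) ^ 2
      = MM ^ 2 * f x ^ 2 - (2 * MM * c) * f x + c ^ 2 := fun x _ => by ring
  rw [Finset.sum_congr rfl key, Finset.sum_add_distrib, Finset.sum_sub_distrib,
    ← Finset.mul_sum, ← Finset.mul_sum, hsum, Finset.sum_const, nsmul_eq_mul, hc]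
  ring

set_option maxHeartbeats 4000000 in
private theorem main_aux (n : ℕ) (hn : 3 ≤ n) (h : Fin n → Fin n → Fin n → ℝ)
    (h12 : ∀ i j k : Fin n, h i j k = h j i k)
    (h23 : ∀ i j k : Fin n, h i j k = h i k j)
    (z : Fin n) (hz : (z : ℕ) = 0) :
    (∑ r : Fin n, ∑ i : Fin n, ∑ j : Fin n,
        if i < j then h r i i * h r j j - (h r i j) ^ 2 else 0)
      - (1 / ((n : ℝ) - 1)) *
        (∑ r : Fin n, ∑ j : Fin n, if 1 ≤ (j : ℕ) then
            h r z z * h r j j - (h r z j) ^ 2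
          else 0)
    ≤ (3 * (n : ℝ) - 1) * ((n : ℝ) - 2) / (2 * (3 * (n : ℝ) + 5) * ((n : ℝ) - 1)) *
        ∑ r : Fin n, (∑ i : Fin n, h r i i) ^ 2 := by
  have hn3 : (3 : ℝ) ≤ (n : ℝ) := by exact_mod_cast hn
  -- full symmetry helper
  have cyc : ∀ i j k : Fin n, h i j k = h j k i := fun i j k => by
    rw [h12 i j k, h23 j i k]
  -- basic erase facts
  have hzmem : z ∈ (Finset.univ : Finset (Fin n)) := Finset.mem_univ z
  have hcardK : ((Finset.univ.erase z).card : ℝ) = (n : ℝ) - 1 := by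
    have h1 : (Finset.univ.erase z).card = n - 1 := by
      rw [Finset.card_erase_of_mem hzmem, Finset.card_univ, Fintype.card_fin]
    rw [h1, Nat.cast_sub (by omega : 1 ≤ n), Nat.cast_one]
  have hcardKa : ∀ a ∈ Finset.univ.erase z,
      (((Finset.univ.erase z).erase a).card : ℝ) = (n : ℝ) - 2 := by
    intro a ha
    have h1 : ((Finset.univ.erase z).erase a).card = n - 2 := by
      rw [Finset.card_erase_of_mem ha, Finset.card_erase_of_mem hzmem,
        Finset.card_univ, Fintype.card_fin]
      omega
    rw [h1, Nat.cast_sub (by omega : 2 ≤ n), Nat.cast_two]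
  -- Step 1 : the first big sum
  have hS1 : (∑ r : Fin n, ∑ i : Fin n, ∑ j : Fin n,
        if i < j then h r i i * h r j j - (h r i j) ^ 2 else 0)
      = ((∑ r, (∑ i, h r i i) ^ 2) - ∑ r, ∑ i, ∑ j, h r i j ^ 2) / 2 := by
    have per : ∀ r : Fin n, (∑ i : Fin n, ∑ j : Fin n,
          if i < j then h r i i * h r j j - (h r i j) ^ 2 else 0)
        = ((∑ i, h r i i) ^ 2 - ∑ i, ∑ j, h r i j ^ 2) / 2 := by
      intro r
      exact pairs_half (fun i => h r i i) (fun i j => h r i j)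
        (fun i j => h23 r i j) (fun i => rfl)
    rw [Finset.sum_congr rfl fun r _ => per r, ← Finset.sum_div, Finset.sum_sub_distrib]
  -- Step 2 : the second big sum
  have hS2 : (∑ r : Fin n, ∑ j : Fin n, if 1 ≤ (j : ℕ) then
        h r z z * h r j j - (h r z j) ^ 2 else 0)
      = (∑ r, h r z z * ∑ j, h r j j) - ∑ r, ∑ j, h r z j ^ 2 := by
    have per : ∀ r : Fin n, (∑ j : Fin n, if 1 ≤ (j : ℕ) then
          h r z z * h r j j - (h r z j) ^ 2 else 0)
        = h r z z * (∑ j, h r j j) - ∑ j, h r z j ^ 2 := by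
      intro r
      have hdrop : ∀ j : Fin n, (if 1 ≤ (j : ℕ) then
            h r z z * h r j j - (h r z j) ^ 2 else 0)
          = h r z z * h r j j - h r z j ^ 2 := by
        intro j
        by_cases hj : 1 ≤ (j : ℕ)
        · rw [if_pos hj]
        · rw [if_neg hj]
          have hjz : j = z := Fin.ext (by omega)
          rw [hjz]; ring
      rw [Finset.sum_congr rfl fun j _ => hdrop j, Finset.sum_sub_distrib, Finset.mul_sum]
    rw [Finset.sum_congr rfl fun r _ => per r, Finset.sum_sub_distrib]
  rw [hS1, hS2]
  -- index-0 splits of the four atoms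
  have hTz : (∑ i, h z i i) = h z z z + (∑ b ∈ Finset.univ.erase z, h z b b) :=
    (Finset.add_sum_erase _ _ hzmem).symm
  have hTa : ∀ a ∈ Finset.univ.erase z, (∑ i, h a i i) = h a z z + (h a a a + ∑ b ∈ (Finset.univ.erase z).erase a, h a b b) := by
    intro a ha
    rw [show (∑ i, h a i i) = h a z z + ∑ i ∈ Finset.univ.erase z, h a i i from
      (Finset.add_sum_erase _ _ hzmem).symm]
    rw [show (∑ i ∈ Finset.univ.erase z, h a i i) = h a a a + ∑ b ∈ (Finset.univ.erase z).erase a, h a b b from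
      (Finset.add_sum_erase _ _ ha).symm]
  have hA4 : (∑ r, (∑ i, h r i i) ^ 2) = (h z z z + (∑ b ∈ Finset.univ.erase z, h z b b)) ^ 2 + (∑ a ∈ Finset.univ.erase z, (h a z z + (h a a a + ∑ b ∈ (Finset.univ.erase z).erase a, h a b b)) ^ 2) := by
    rw [show (∑ r, (∑ i, h r i i) ^ 2) = (∑ i, h z i i) ^ 2 + ∑ a ∈ Finset.univ.erase z, (∑ i, h a i i) ^ 2 from
      (Finset.add_sum_erase _ _ hzmem).symm]
    rw [hTz]
    congr 1
    exact Finset.sum_congr rfl fun a ha => by rw [hTa a ha]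
  have hC1 : (∑ r, h r z z * ∑ j, h r j j) = h z z z * (h z z z + (∑ b ∈ Finset.univ.erase z, h z b b)) + (∑ a ∈ Finset.univ.erase z, h a z z * (h a z z + (h a a a + ∑ b ∈ (Finset.univ.erase z).erase a, h a b b))) := by
    rw [show (∑ r, h r z z * ∑ j, h r j j) = h z z z * (∑ j, h z j j) + ∑ a ∈ Finset.univ.erase z, h a z z * ∑ j, h a j j from
      (Finset.add_sum_erase _ _ hzmem).symm]
    rw [hTz]
    congr 1
    exact Finset.sum_congr rfl fun a ha => by rw [hTa a ha]
  have hB2K : (∑ a ∈ Finset.univ.erase z, ∑ b ∈ Finset.univ.erase z, h z a b ^ 2)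
      = (∑ a ∈ Finset.univ.erase z, h z a a ^ 2) + (∑ a ∈ Finset.univ.erase z, ∑ b ∈ (Finset.univ.erase z).erase a, h z a b ^ 2) := by
    rw [← Finset.sum_add_distrib]
    exact Finset.sum_congr rfl fun a ha => (Finset.add_sum_erase _ _ ha).symm
  have hB3 : (∑ r, ∑ j, h r z j ^ 2) = (h z z z) ^ 2 + 2 * (∑ a ∈ Finset.univ.erase z, h a z z ^ 2) + ((∑ a ∈ Finset.univ.erase z, h z a a ^ 2) + (∑ a ∈ Finset.univ.erase z, ∑ b ∈ (Finset.univ.erase z).erase a, h z a b ^ 2)) := by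
    have per : ∀ r : Fin n, (∑ j, h r z j ^ 2) = h r z z ^ 2 + ∑ j ∈ Finset.univ.erase z, h r z j ^ 2 :=
      fun r => (Finset.add_sum_erase _ _ hzmem).symm
    rw [Finset.sum_congr rfl fun r _ => per r, Finset.sum_add_distrib]
    rw [show (∑ r, h r z z ^ 2) = (h z z z) ^ 2 + (∑ a ∈ Finset.univ.erase z, h a z z ^ 2) from
      (Finset.add_sum_erase _ _ hzmem).symm]
    rw [show (∑ r, ∑ j ∈ Finset.univ.erase z, h r z j ^ 2)
        = (∑ j ∈ Finset.univ.erase z, h z z j ^ 2) + ∑ a ∈ Finset.univ.erase z, ∑ j ∈ Finset.univ.erase z, h a z j ^ 2 from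
      (Finset.add_sum_erase _ _ hzmem).symm]
    rw [show (∑ j ∈ Finset.univ.erase z, h z z j ^ 2) = (∑ a ∈ Finset.univ.erase z, h a z z ^ 2) from
      Finset.sum_congr rfl fun j _ => by rw [cyc j z z]]
    rw [show (∑ a ∈ Finset.univ.erase z, ∑ j ∈ Finset.univ.erase z, h a z j ^ 2) = ∑ a ∈ Finset.univ.erase z, ∑ j ∈ Finset.univ.erase z, h z a j ^ 2 from
      Finset.sum_congr rfl fun a _ => Finset.sum_congr rfl fun j _ => by rw [h12 a z j]]
    rw [hB2K]
    ring
  -- triple split of A3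
  have hrow : ∀ r : Fin n, (∑ i, ∑ j, h r i j ^ 2)
      = h r z z ^ 2 + 2 * (∑ i ∈ Finset.univ.erase z, h r z i ^ 2) + ∑ i ∈ Finset.univ.erase z, ∑ j ∈ Finset.univ.erase z, h r i j ^ 2 := by
    intro r
    rw [show (∑ i, ∑ j, h r i j ^ 2)
        = (∑ j, h r z j ^ 2) + ∑ i ∈ Finset.univ.erase z, ∑ j, h r i j ^ 2 from
      (Finset.add_sum_erase _ _ hzmem).symm]
    rw [show (∑ j, h r z j ^ 2) = h r z z ^ 2 + ∑ j ∈ Finset.univ.erase z, h r z j ^ 2 from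
      (Finset.add_sum_erase _ _ hzmem).symm]
    rw [show (∑ i ∈ Finset.univ.erase z, ∑ j, h r i j ^ 2)
        = ∑ i ∈ Finset.univ.erase z, (h r z i ^ 2 + ∑ j ∈ Finset.univ.erase z, h r i j ^ 2) from
      Finset.sum_congr rfl fun i _ => by
        rw [show (∑ j, h r i j ^ 2) = h r i z ^ 2 + ∑ j ∈ Finset.univ.erase z, h r i j ^ 2 from
          (Finset.add_sum_erase _ _ hzmem).symm, h23 r i z]]
    rw [Finset.sum_add_distrib]
    ring
  have swap1 : (∑ a ∈ Finset.univ.erase z, ∑ c ∈ (Finset.univ.erase z).erase a, h a a c ^ 2)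
      = ∑ a ∈ Finset.univ.erase z, ∑ c ∈ (Finset.univ.erase z).erase a, h a c c ^ 2 :=
    calc (∑ a ∈ Finset.univ.erase z, ∑ c ∈ (Finset.univ.erase z).erase a, h a a c ^ 2)
        = ∑ a ∈ Finset.univ.erase z, ∑ c ∈ (Finset.univ.erase z).erase a, h c c a ^ 2 :=
          sum_erase_swap (Finset.univ.erase z) (fun x y => h x x y ^ 2)
      _ = ∑ a ∈ Finset.univ.erase z, ∑ c ∈ (Finset.univ.erase z).erase a, h a c c ^ 2 :=
          Finset.sum_congr rfl fun a _ => Finset.sum_congr rfl fun c _ => by rw [cyc a c c]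
  have swap2 : (∑ a ∈ Finset.univ.erase z, ∑ b ∈ (Finset.univ.erase z).erase a, h a b a ^ 2)
      = ∑ a ∈ Finset.univ.erase z, ∑ b ∈ (Finset.univ.erase z).erase a, h a b b ^ 2 :=
    calc (∑ a ∈ Finset.univ.erase z, ∑ b ∈ (Finset.univ.erase z).erase a, h a b a ^ 2)
        = ∑ a ∈ Finset.univ.erase z, ∑ b ∈ (Finset.univ.erase z).erase a, h a a b ^ 2 :=
          Finset.sum_congr rfl fun a _ => Finset.sum_congr rfl fun b _ => by rw [h23 a b a]
      _ = ∑ a ∈ Finset.univ.erase z, ∑ b ∈ (Finset.univ.erase z).erase a, h b b a ^ 2 :=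
          sum_erase_swap (Finset.univ.erase z) (fun x y => h x x y ^ 2)
      _ = ∑ a ∈ Finset.univ.erase z, ∑ b ∈ (Finset.univ.erase z).erase a, h a b b ^ 2 :=
          Finset.sum_congr rfl fun a _ => Finset.sum_congr rfl fun b _ => by rw [cyc a b b]
  have hA3K : (∑ a ∈ Finset.univ.erase z, ∑ b ∈ Finset.univ.erase z, ∑ c ∈ Finset.univ.erase z, h a b c ^ 2)
      = (∑ a ∈ Finset.univ.erase z, h a a a ^ 2) + 3 * (∑ a ∈ Finset.univ.erase z, ∑ b ∈ (Finset.univ.erase z).erase a, h a b b ^ 2) + (∑ a ∈ Finset.univ.erase z, ∑ b ∈ (Finset.univ.erase z).erase a, ∑ c ∈ ((Finset.univ.erase z).erase b).erase a, h a b c ^ 2) := by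
    have inner : ∀ a ∈ Finset.univ.erase z, (∑ b ∈ Finset.univ.erase z, ∑ c ∈ Finset.univ.erase z, h a b c ^ 2)
        = (h a a a ^ 2 + ∑ b ∈ (Finset.univ.erase z).erase a, h a b b ^ 2)
          + ((∑ c ∈ (Finset.univ.erase z).erase a, h a a c ^ 2)
            + ∑ b ∈ (Finset.univ.erase z).erase a, (h a b a ^ 2 + ∑ c ∈ ((Finset.univ.erase z).erase b).erase a, h a b c ^ 2)) := by
      intro a ha
      rw [show (∑ b ∈ Finset.univ.erase z, ∑ c ∈ Finset.univ.erase z, h a b c ^ 2)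
          = ∑ b ∈ Finset.univ.erase z, (h a b b ^ 2 + ∑ c ∈ (Finset.univ.erase z).erase b, h a b c ^ 2) from
        Finset.sum_congr rfl fun b hb => (Finset.add_sum_erase _ _ hb).symm]
      rw [Finset.sum_add_distrib]
      congr 1
      · exact (Finset.add_sum_erase _ _ ha).symm
      · rw [show (∑ b ∈ Finset.univ.erase z, ∑ c ∈ (Finset.univ.erase z).erase b, h a b c ^ 2)
            = (∑ c ∈ (Finset.univ.erase z).erase a, h a a c ^ 2)
              + ∑ b ∈ (Finset.univ.erase z).erase a, ∑ c ∈ (Finset.univ.erase z).erase b, h a b c ^ 2 from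
          (Finset.add_sum_erase _ _ ha).symm]
        congr 1
        refine Finset.sum_congr rfl fun b hb => ?_
        have hab : a ∈ (Finset.univ.erase z).erase b :=
          Finset.mem_erase.mpr ⟨(Finset.ne_of_mem_erase hb).symm, ha⟩
        exact (Finset.add_sum_erase _ _ hab).symm
    rw [Finset.sum_congr rfl inner]
    simp only [Finset.sum_add_distrib]
    rw [swap1, swap2]
    ring
  have hA3 : (∑ r, ∑ i, ∑ j, h r i j ^ 2)
      = (h z z z) ^ 2 + 3 * (∑ a ∈ Finset.univ.erase z, h a z z ^ 2) + 3 * (∑ a ∈ Finset.univ.erase z, h z a a ^ 2) + 3 * (∑ a ∈ Finset.univ.erase z, ∑ b ∈ (Finset.univ.erase z).erase a, h z a b ^ 2)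
        + ((∑ a ∈ Finset.univ.erase z, h a a a ^ 2) + 3 * (∑ a ∈ Finset.univ.erase z, ∑ b ∈ (Finset.univ.erase z).erase a, h a b b ^ 2) + (∑ a ∈ Finset.univ.erase z, ∑ b ∈ (Finset.univ.erase z).erase a, ∑ c ∈ ((Finset.univ.erase z).erase b).erase a, h a b c ^ 2)) := by
    rw [show (∑ r, ∑ i, ∑ j, h r i j ^ 2) = (∑ i, ∑ j, h z i j ^ 2) + ∑ r ∈ Finset.univ.erase z, ∑ i, ∑ j, h r i j ^ 2 from
      (Finset.add_sum_erase _ _ hzmem).symm]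
    rw [hrow z]
    rw [Finset.sum_congr rfl fun r (_ : r ∈ Finset.univ.erase z) => hrow r]
    rw [show (∑ i ∈ Finset.univ.erase z, h z z i ^ 2) = (∑ a ∈ Finset.univ.erase z, h a z z ^ 2) from
      Finset.sum_congr rfl fun i _ => by rw [cyc i z z]]
    simp only [Finset.sum_add_distrib, ← Finset.mul_sum]
    rw [show (∑ r ∈ Finset.univ.erase z, ∑ i ∈ Finset.univ.erase z, h r z i ^ 2) = ∑ r ∈ Finset.univ.erase z, ∑ i ∈ Finset.univ.erase z, h z r i ^ 2 from
      Finset.sum_congr rfl fun r _ => Finset.sum_congr rfl fun i _ => by rw [h12 r z i]]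
    rw [hB2K, hA3K]
    ring
  -- expansions of the two slack families
  have hVexp : (∑ a ∈ Finset.univ.erase z, (((n : ℝ) - 1) * h z a a - (∑ b ∈ Finset.univ.erase z, h z b b)) ^ 2) = ((n : ℝ) - 1) ^ 2 * (∑ a ∈ Finset.univ.erase z, h z a a ^ 2) - ((n : ℝ) - 1) * (∑ b ∈ Finset.univ.erase z, h z b b) ^ 2 :=
    calc (∑ a ∈ Finset.univ.erase z, (((n : ℝ) - 1) * h z a a - (∑ b ∈ Finset.univ.erase z, h z b b)) ^ 2)
        = ((n : ℝ) - 1) ^ 2 * (∑ a ∈ Finset.univ.erase z, h z a a ^ 2) - (2 * ((n : ℝ) - 1) - ((n : ℝ) - 1)) * (∑ b ∈ Finset.univ.erase z, h z b b) ^ 2 :=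
          sum_shift_sq _ (fun a => h z a a) _ _ _ hcardK rfl
      _ = ((n : ℝ) - 1) ^ 2 * (∑ a ∈ Finset.univ.erase z, h z a a ^ 2) - ((n : ℝ) - 1) * (∑ b ∈ Finset.univ.erase z, h z b b) ^ 2 := by ring
  have hEexp : (∑ a ∈ Finset.univ.erase z, ∑ b ∈ (Finset.univ.erase z).erase a, (((n : ℝ) - 2) * h a b b - ∑ b ∈ (Finset.univ.erase z).erase a, h a b b) ^ 2) = ((n : ℝ) - 2) ^ 2 * (∑ a ∈ Finset.univ.erase z, ∑ b ∈ (Finset.univ.erase z).erase a, h a b b ^ 2) - ((n : ℝ) - 2) * (∑ a ∈ Finset.univ.erase z, (∑ b ∈ (Finset.univ.erase z).erase a, h a b b) ^ 2) := by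
    have per : ∀ a ∈ Finset.univ.erase z, (∑ b ∈ (Finset.univ.erase z).erase a, (((n : ℝ) - 2) * h a b b - ∑ b ∈ (Finset.univ.erase z).erase a, h a b b) ^ 2)
        = ((n : ℝ) - 2) ^ 2 * (∑ b ∈ (Finset.univ.erase z).erase a, h a b b ^ 2)
          - ((n : ℝ) - 2) * (∑ b ∈ (Finset.univ.erase z).erase a, h a b b) ^ 2 := by
      intro a ha
      calc (∑ b ∈ (Finset.univ.erase z).erase a, (((n : ℝ) - 2) * h a b b - ∑ b ∈ (Finset.univ.erase z).erase a, h a b b) ^ 2)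
          = ((n : ℝ) - 2) ^ 2 * (∑ b ∈ (Finset.univ.erase z).erase a, h a b b ^ 2)
            - (2 * ((n : ℝ) - 2) - ((n : ℝ) - 2)) * (∑ b ∈ (Finset.univ.erase z).erase a, h a b b) ^ 2 :=
            sum_shift_sq _ (fun b => h a b b) _ _ _ (hcardKa a ha) rfl
        _ = _ := by ring
    rw [Finset.sum_congr rfl per, Finset.sum_sub_distrib, ← Finset.mul_sum, ← Finset.mul_sum]
  -- the per-index quadratic identity, summed
  have hIImain : ((3 * (n : ℝ) + 5) * ((n : ℝ) - 1) ^ 3 * ((n : ℝ) + 1) * ((n : ℝ) - 2) ^ 2 * (3 * (n : ℝ) - 1)) * (∑ a ∈ Finset.univ.erase z, h a a a ^ 2) + (-((9 * (n : ℝ) - 7) * ((n : ℝ) - 1) ^ 2 * ((n : ℝ) + 1) * ((n : ℝ) - 2) ^ 2 * (3 * (n : ℝ) - 1))) * (∑ a ∈ Finset.univ.erase z, (h a z z + (h a a a + ∑ b ∈ (Finset.univ.erase z).erase a, h a b b)) ^ 2) + (3 * ((3 * (n : ℝ) + 5) * ((n : ℝ) - 1) ^ 3 * ((n : ℝ) +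 1) * ((n : ℝ) - 2) ^ 2 * (3 * (n : ℝ) - 1)) - 2 * (2 * (3 * (n : ℝ) + 5) * ((n : ℝ) - 1) ^ 2 * ((n : ℝ) + 1) * ((n : ℝ) - 2) ^ 2 * (3 * (n : ℝ) - 1))) * (∑ a ∈ Finset.univ.erase z, h a z z ^ 2)
        + (2 * (3 * (n : ℝ) + 5) * ((n : ℝ) - 1) ^ 2 * ((n : ℝ) + 1) * ((n : ℝ) - 2) ^ 2 * (3 * (n : ℝ) - 1)) * (∑ a ∈ Finset.univ.erase z, h a z z * (h a z z + (h a a a + ∑ b ∈ (Finset.univ.erase z).erase a, h a b b))) + (3 * (3 * (n : ℝ) + 5) * ((n : ℝ) - 1) ^ 3 * ((n : ℝ) + 1) * ((n : ℝ) - 2) * (3 * (n : ℝ) - 1)) * (∑ a ∈ Finset.univ.erase z, (∑ b ∈ (Finset.univ.erase z).erase a, h a b b) ^ 2)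
      = (((n : ℝ) - 1) ^ 2 * ((n : ℝ) - 2) ^ 3 * (3 * (n : ℝ) - 1)) * (∑ a ∈ Finset.univ.erase z, (3 * ((n : ℝ) + 1) * h a z z - 2 * (h a a a + ∑ b ∈ (Finset.univ.erase z).erase a, h a b b)) ^ 2) + ((3 * (n : ℝ) + 5) * ((n : ℝ) - 1) ^ 3 * ((n : ℝ) - 2) * (3 * (n : ℝ) - 1)) * (∑ a ∈ Finset.univ.erase z, (((n : ℝ) - 2) * h a a a - 3 * (∑ b ∈ (Finset.univ.erase z).erase a, h a b b)) ^ 2) := by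
    have hpt : ∀ a ∈ Finset.univ.erase z, ((3 * (n : ℝ) + 5) * ((n : ℝ) - 1) ^ 3 * ((n : ℝ) + 1) * ((n : ℝ) - 2) ^ 2 * (3 * (n : ℝ) - 1)) * (h a a a ^ 2) + (-((9 * (n : ℝ) - 7) * ((n : ℝ) - 1) ^ 2 * ((n : ℝ) + 1) * ((n : ℝ) - 2) ^ 2 * (3 * (n : ℝ) - 1))) * ((h a z z + (h a a a + ∑ b ∈ (Finset.univ.erase z).erase a, h a b b)) ^ 2)
          + (3 * ((3 * (n : ℝ) + 5) * ((n : ℝ) - 1) ^ 3 * ((n : ℝ) + 1) * ((n : ℝ) - 2) ^ 2 * (3 * (n : ℝ) - 1)) - 2 * (2 * (3 * (n : ℝ) + 5) * ((n : ℝ) - 1) ^ 2 * ((n : ℝ) + 1) * ((n : ℝ) - 2) ^ 2 * (3 * (n : ℝ) - 1))) * (h a z z ^ 2) + (2 * (3 * (n : ℝ) + 5) * ((n : ℝ) - 1) ^ 2 * ((n : ℝ) + 1) * ((n : ℝ) - 2) ^ 2 * (3 * (n : ℝ) - 1)) * (h a z z * (h a z z + (h a a a + ∑ b ∈ (Finset.univ.erase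 z).erase a, h a b b))) + (3 * (3 * (n : ℝ) + 5) * ((n : ℝ) - 1) ^ 3 * ((n : ℝ) + 1) * ((n : ℝ) - 2) * (3 * (n : ℝ) - 1)) * ((∑ b ∈ (Finset.univ.erase z).erase a, h a b b) ^ 2)
        = (((n : ℝ) - 1) ^ 2 * ((n : ℝ) - 2) ^ 3 * (3 * (n : ℝ) - 1)) * ((3 * ((n : ℝ) + 1) * h a z z - 2 * (h a a a + ∑ b ∈ (Finset.univ.erase z).erase a, h a b b)) ^ 2) + ((3 * (n : ℝ) + 5) * ((n : ℝ) - 1) ^ 3 * ((n : ℝ) - 2) * (3 * (n : ℝ) - 1)) * ((((n : ℝ) - 2) * h a a a - 3 * (∑ b ∈ (Finset.univ.erase z).erase a, h a b b)) ^ 2) := fun a _ => by ring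
    have hsum := Finset.sum_congr rfl hpt
    calc ((3 * (n : ℝ) + 5) * ((n : ℝ) - 1) ^ 3 * ((n : ℝ) + 1) * ((n : ℝ) - 2) ^ 2 * (3 * (n : ℝ) - 1)) * (∑ a ∈ Finset.univ.erase z, h a a a ^ 2) + (-((9 * (n : ℝ) - 7) * ((n : ℝ) - 1) ^ 2 * ((n : ℝ) + 1) * ((n : ℝ) - 2) ^ 2 * (3 * (n : ℝ) - 1))) * (∑ a ∈ Finset.univ.erase z, (h a z z + (h a a a + ∑ b ∈ (Finset.univ.erase z).erase a, h a b b)) ^ 2) + (3 * ((3 * (n : ℝ) + 5) * ((n : ℝ) - 1) ^ 3 * ((n : ℝ) + 1) * ((n : ℝ) - 2) ^ 2 * (3 * (n : ℝ) - 1)) - 2 * (2 * (3 * (n : ℝ) + 5) * ((n : ℝ) - 1) ^ 2 * ((n : ℝ) + 1) * ((n : ℝ) - 2) ^ 2 * (3 * (n : ℝ) - 1))) * (∑ a ∈ Finset.univ.erase z, h a z z ^ 2)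
          + (2 * (3 * (n : ℝ) + 5) * ((n : ℝ) - 1) ^ 2 * ((n : ℝ) + 1) * ((n : ℝ) - 2) ^ 2 * (3 * (n : ℝ) - 1)) * (∑ a ∈ Finset.univ.erase z, h a z z * (h a z z + (h a a a + ∑ b ∈ (Finset.univ.erase z).erase a, h a b b))) + (3 * (3 * (n : ℝ) + 5) * ((n : ℝ) - 1) ^ 3 * ((n : ℝ) + 1) * ((n : ℝ) - 2) * (3 * (n : ℝ) - 1)) * (∑ a ∈ Finset.univ.erase z, (∑ b ∈ (Finset.univ.erase z).erase a, h a b b) ^ 2)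
        = ∑ a ∈ Finset.univ.erase z, (((3 * (n : ℝ) + 5) * ((n : ℝ) - 1) ^ 3 * ((n : ℝ) + 1) * ((n : ℝ) - 2) ^ 2 * (3 * (n : ℝ) - 1)) * (h a a a ^ 2) + (-((9 * (n : ℝ) - 7) * ((n : ℝ) - 1) ^ 2 * ((n : ℝ) + 1) * ((n : ℝ) - 2) ^ 2 * (3 * (n : ℝ) - 1))) * ((h a z z + (h a a a + ∑ b ∈ (Finset.univ.erase z).erase a, h a b b)) ^ 2)
            + (3 * ((3 * (n : ℝ) + 5) * ((n : ℝ) - 1) ^ 3 * ((n : ℝ) + 1) * ((n : ℝ) - 2) ^ 2 * (3 * (n : ℝ) - 1)) - 2 * (2 * (3 * (n : ℝ) + 5) * ((n : ℝ) - 1) ^ 2 * ((n : ℝ) + 1) * ((n : ℝ) - 2) ^ 2 * (3 * (n : ℝ) - 1))) * (h a z z ^ 2) + (2 * (3 * (n : ℝ) + 5) * ((n : ℝ) - 1) ^ 2 * ((n : ℝ) + 1) * ((n : ℝ) - 2) ^ 2 * (3 * (n : ℝ) - 1)) * (h a z z * (h a z z + (h a a a + ∑ b ∈ (Finset.univ.erase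 z).erase a, h a b b))) + (3 * (3 * (n : ℝ) + 5) * ((n : ℝ) - 1) ^ 3 * ((n : ℝ) + 1) * ((n : ℝ) - 2) * (3 * (n : ℝ) - 1)) * ((∑ b ∈ (Finset.univ.erase z).erase a, h a b b) ^ 2)) := by
          rw [Finset.mul_sum, Finset.mul_sum, Finset.mul_sum, Finset.mul_sum, Finset.mul_sum,
            ← Finset.sum_add_distrib, ← Finset.sum_add_distrib, ← Finset.sum_add_distrib,
            ← Finset.sum_add_distrib]
      _ = ∑ a ∈ Finset.univ.erase z, ((((n : ℝ) - 1) ^ 2 * ((n : ℝ) - 2) ^ 3 * (3 * (n : ℝ) - 1)) * ((3 * ((n : ℝ) + 1) * h a z z - 2 * (h a a a + ∑ b ∈ (Finset.univ.erase z).erase a, h a b b)) ^ 2) + ((3 * (n : ℝ) + 5) * ((n : ℝ) - 1) ^ 3 * ((n : ℝ) - 2) * (3 * (n : ℝ) - 1)) * ((((n : ℝ) - 2) * h a a a - 3 * (∑ b ∈ (Finset.univ.erase z).erase a, h a b b)) ^ 2)) := hsum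
      _ = (((n : ℝ) - 1) ^ 2 * ((n : ℝ) - 2) ^ 3 * (3 * (n : ℝ) - 1)) * (∑ a ∈ Finset.univ.erase z, (3 * ((n : ℝ) + 1) * h a z z - 2 * (h a a a + ∑ b ∈ (Finset.univ.erase z).erase a, h a b b)) ^ 2) + ((3 * (n : ℝ) + 5) * ((n : ℝ) - 1) ^ 3 * ((n : ℝ) - 2) * (3 * (n : ℝ) - 1)) * (∑ a ∈ Finset.univ.erase z, (((n : ℝ) - 2) * h a a a - 3 * (∑ b ∈ (Finset.univ.erase z).erase a, h a b b)) ^ 2) := by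
          rw [Finset.sum_add_distrib, ← Finset.mul_sum, ← Finset.mul_sum]
  -- numeric facts
  have g1 : (0:ℝ) < (n : ℝ) - 1 := by linarith
  have g2 : (0:ℝ) < (n : ℝ) - 2 := by linarith
  have g3 : (0:ℝ) < (n : ℝ) + 1 := by linarith
  have gR : (0:ℝ) < 3 * (n : ℝ) - 1 := by linarith
  have g5 : (0:ℝ) < 3 * (n : ℝ) + 5 := by linarith
  have g6 : (0:ℝ) ≤ 3 * (n : ℝ) - 5 := by linarith
  have hcc : (2 * (3 * (n : ℝ) + 5) * ((n : ℝ) - 1) ^ 3 * ((n : ℝ) + 1) * ((n : ℝ) - 2) ^ 2 * (3 * (n : ℝ) - 1)) * ((3 * (n : ℝ) - 1) * ((n : ℝ) - 2) / (2 * (3 * (n : ℝ) + 5) * ((n : ℝ) - 1))) = ((n : ℝ) - 1) ^ 2 * ((n : ℝ) + 1) * ((n : ℝ) - 2) ^ 3 * (3 * (n : ℝ) - 1) ^ 2 := by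
    have hne1 : (2 * (3 * (n : ℝ) + 5) * ((n : ℝ) - 1)) ≠ 0 := by positivity
    field_simp
  have hinv : (2 * (3 * (n : ℝ) + 5) * ((n : ℝ) - 1) ^ 3 * ((n : ℝ) + 1) * ((n : ℝ) - 2) ^ 2 * (3 * (n : ℝ) - 1)) * (1 / ((n : ℝ) - 1)) = 2 * (3 * (n : ℝ) + 5) * ((n : ℝ) - 1) ^ 2 * ((n : ℝ) + 1) * ((n : ℝ) - 2) ^ 2 * (3 * (n : ℝ) - 1) := by
    have hne1 : ((n : ℝ) - 1) ≠ 0 := ne_of_gt g1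
    field_simp
  -- the master identity
  have key : (2 * (3 * (n : ℝ) + 5) * ((n : ℝ) - 1) ^ 3 * ((n : ℝ) + 1) * ((n : ℝ) - 2) ^ 2 * (3 * (n : ℝ) - 1)) * (((3 * (n : ℝ) - 1) * ((n : ℝ) - 2) / (2 * (3 * (n : ℝ) + 5) * ((n : ℝ) - 1))) * (∑ r, (∑ i, h r i i) ^ 2)
        - (((∑ r, (∑ i, h r i i) ^ 2) - (∑ r, ∑ i, ∑ j, h r i j ^ 2)) / 2 - 1 / ((n : ℝ) - 1) * ((∑ r, h r z z * ∑ j, h r j j) - (∑ r, ∑ j, h r z j ^ 2))))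
      = ((3 * (n : ℝ) - 5) * (3 * (n : ℝ) + 5) * ((n : ℝ) + 1) * ((n : ℝ) - 2) ^ 2 * (3 * (n : ℝ) - 1)) * (∑ a ∈ Finset.univ.erase z, (((n : ℝ) - 1) * h z a a - (∑ b ∈ Finset.univ.erase z, h z b b)) ^ 2) + (((n : ℝ) - 1) ^ 2 * ((n : ℝ) + 1) * ((n : ℝ) - 2) ^ 3) * ((3 * (n : ℝ) - 1) * (h z z z) - 6 * (∑ b ∈ Finset.univ.erase z, h z b b)) ^ 2
        + (4 * (3 * (n : ℝ) + 5) * ((n : ℝ) - 1) * ((n : ℝ) + 1) * ((n : ℝ) - 2) ^ 3) * (∑ b ∈ Finset.univ.erase z, h z b b) ^ 2 + (((n : ℝ) - 1) ^ 2 * ((n : ℝ) - 2) ^ 3 * (3 * (n : ℝ) - 1)) * (∑ a ∈ Finset.univ.erase z, (3 * ((n : ℝ) + 1) * h a z z - 2 * (h a a a + ∑ b ∈ (Finset.univ.erase z).erase a, h a b b)) ^ 2) + ((3 * (n : ℝ) + 5) * ((n : ℝ) - 1) ^ 3 * ((n : ℝ) - 2) * (3 * (n : ℝ) - 1)) * (∑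 a ∈ Finset.univ.erase z, (((n : ℝ) - 2) * h a a a - 3 * (∑ b ∈ (Finset.univ.erase z).erase a, h a b b)) ^ 2)
        + (3 * (3 * (n : ℝ) + 5) * ((n : ℝ) - 1) ^ 3 * ((n : ℝ) + 1) * (3 * (n : ℝ) - 1)) * (∑ a ∈ Finset.univ.erase z, ∑ b ∈ (Finset.univ.erase z).erase a, (((n : ℝ) - 2) * h a b b - ∑ b ∈ (Finset.univ.erase z).erase a, h a b b) ^ 2) + ((3 * (n : ℝ) - 5) * (3 * (n : ℝ) + 5) * ((n : ℝ) - 1) ^ 2 * ((n : ℝ) + 1) * ((n : ℝ) - 2) ^ 2 * (3 * (n : ℝ) - 1)) * (∑ a ∈ Finset.univ.erase z, ∑ b ∈ (Finset.univ.erase z).erase a, h z a b ^ 2) + ((3 * (n : ℝ) + 5) * ((n : ℝ) - 1) ^ 3 * ((n : ℝ) + 1) * ((n : ℝ) - 2) ^ 2 * (3 * (n : ℝ) - 1)) * (∑ a ∈ Finset.univ.erase z, ∑ b ∈ (Finset.univ.erase z).erase a, ∑ c ∈ ((Finset.univ.erase z).erase b).erase a, h a b c ^ 2) := by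
    linear_combination ((∑ r, (∑ i, h r i i) ^ 2)) * hcc + ((∑ r, h r z z * ∑ j, h r j j) - (∑ r, ∑ j, h r z j ^ 2)) * hinv + (-((9 * (n : ℝ) - 7) * ((n : ℝ) - 1) ^ 2 * ((n : ℝ) + 1) * ((n : ℝ) - 2) ^ 2 * (3 * (n : ℝ) - 1))) * hA4
      + ((3 * (n : ℝ) + 5) * ((n : ℝ) - 1) ^ 3 * ((n : ℝ) + 1) * ((n : ℝ) - 2) ^ 2 * (3 * (n : ℝ) - 1)) * hA3 + (2 * (3 * (n : ℝ) + 5) * ((n : ℝ) - 1) ^ 2 * ((n : ℝ) + 1) * ((n : ℝ) - 2) ^ 2 * (3 * (n : ℝ) - 1)) * hC1 - (2 * (3 * (n : ℝ) + 5) * ((n : ℝ) - 1) ^ 2 * ((n : ℝ) + 1) * ((n : ℝ) - 2) ^ 2 * (3 * (n : ℝ) - 1)) * hB3 - ((3 * (n : ℝ) - 5) * (3 * (n : ℝ) + 5) * ((n : ℝ) + 1) * ((n : ℝ) - 2) ^ 2 * (3 * (n : ℝ) - 1)) * hVexp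
      - (3 * (3 * (n : ℝ) + 5) * ((n : ℝ) - 1) ^ 3 * ((n : ℝ) + 1) * (3 * (n : ℝ) - 1)) * hEexp + hIImain
  -- nonnegativity of the right-hand side
  have nn1 : (0:ℝ) ≤ ∑ a ∈ Finset.univ.erase z, (((n : ℝ) - 1) * h z a a - (∑ b ∈ Finset.univ.erase z, h z b b)) ^ 2 := Finset.sum_nonneg fun a _ => sq_nonneg _
  have nn4 : (0:ℝ) ≤ ∑ a ∈ Finset.univ.erase z, (3 * ((n : ℝ) + 1) * h a z z - 2 * (h a a a + ∑ b ∈ (Finset.univ.erase z).erase a, h a b b)) ^ 2 := Finset.sum_nonneg fun a _ => sq_nonneg _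
  have nn5 : (0:ℝ) ≤ ∑ a ∈ Finset.univ.erase z, (((n : ℝ) - 2) * h a a a - 3 * (∑ b ∈ (Finset.univ.erase z).erase a, h a b b)) ^ 2 := Finset.sum_nonneg fun a _ => sq_nonneg _
  have nn6 : (0:ℝ) ≤ ∑ a ∈ Finset.univ.erase z, ∑ b ∈ (Finset.univ.erase z).erase a, (((n : ℝ) - 2) * h a b b - ∑ b ∈ (Finset.univ.erase z).erase a, h a b b) ^ 2 :=
    Finset.sum_nonneg fun a _ => Finset.sum_nonneg fun b _ => sq_nonneg _
  have nn7 : (0:ℝ) ≤ ∑ a ∈ Finset.univ.erase z, ∑ b ∈ (Finset.univ.erase z).erase a, h z a b ^ 2 :=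
    Finset.sum_nonneg fun a _ => Finset.sum_nonneg fun b _ => sq_nonneg _
  have nn8 : (0:ℝ) ≤ ∑ a ∈ Finset.univ.erase z, ∑ b ∈ (Finset.univ.erase z).erase a, ∑ c ∈ ((Finset.univ.erase z).erase b).erase a, h a b c ^ 2 :=
    Finset.sum_nonneg fun a _ => Finset.sum_nonneg fun b _ =>
      Finset.sum_nonneg fun c _ => sq_nonneg _
  have ce1 : (0:ℝ) ≤ (3 * (n : ℝ) - 5) * (3 * (n : ℝ) + 5) * ((n : ℝ) + 1) * ((n : ℝ) - 2) ^ 2 * (3 * (n : ℝ) - 1) :=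
    mul_nonneg (mul_nonneg (mul_nonneg (mul_nonneg g6 g5.le) g3.le) (sq_nonneg _)) gR.le
  have ce2 : (0:ℝ) ≤ ((n : ℝ) - 1) ^ 2 * ((n : ℝ) + 1) * ((n : ℝ) - 2) ^ 3 :=
    mul_nonneg (mul_nonneg (sq_nonneg _) g3.le) (pow_nonneg g2.le 3)
  have ce3 : (0:ℝ) ≤ 4 * (3 * (n : ℝ) + 5) * ((n : ℝ) - 1) * ((n : ℝ) + 1) * ((n : ℝ) - 2) ^ 3 :=
    mul_nonneg (mul_nonneg (mul_nonneg (mul_nonneg (by norm_num) g5.le) g1.le) g3.le)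
      (pow_nonneg g2.le 3)
  have ce4 : (0:ℝ) ≤ ((n : ℝ) - 1) ^ 2 * ((n : ℝ) - 2) ^ 3 * (3 * (n : ℝ) - 1) :=
    mul_nonneg (mul_nonneg (sq_nonneg _) (pow_nonneg g2.le 3)) gR.le
  have ce5 : (0:ℝ) ≤ (3 * (n : ℝ) + 5) * ((n : ℝ) - 1) ^ 3 * ((n : ℝ) - 2) * (3 * (n : ℝ) - 1) :=
    mul_nonneg (mul_nonneg (mul_nonneg g5.le (pow_nonneg g1.le 3)) g2.le) gR.le
  have ce6 : (0:ℝ) ≤ 3 * (3 * (n : ℝ) + 5) * ((n : ℝ) - 1) ^ 3 * ((n : ℝ) + 1) * (3 * (n : ℝ) - 1) :=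
    mul_nonneg (mul_nonneg (mul_nonneg (mul_nonneg (by norm_num) g5.le) (pow_nonneg g1.le 3)) g3.le) gR.le
  have ce7 : (0:ℝ) ≤ (3 * (n : ℝ) - 5) * (3 * (n : ℝ) + 5) * ((n : ℝ) - 1) ^ 2 * ((n : ℝ) + 1) * ((n : ℝ) - 2) ^ 2 * (3 * (n : ℝ) - 1) :=
    mul_nonneg (mul_nonneg (mul_nonneg (mul_nonneg (mul_nonneg g6 g5.le) (sq_nonneg _)) g3.le) (sq_nonneg _)) gR.le
  have ce8 : (0:ℝ) ≤ (3 * (n : ℝ) + 5) * ((n : ℝ) - 1) ^ 3 * ((n : ℝ) + 1) * ((n : ℝ) - 2) ^ 2 * (3 * (n : ℝ) - 1) :=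
    mul_nonneg (mul_nonneg (mul_nonneg (mul_nonneg g5.le (pow_nonneg g1.le 3)) g3.le) (sq_nonneg _)) gR.le
  have hNN : (0:ℝ) ≤ ((3 * (n : ℝ) - 5) * (3 * (n : ℝ) + 5) * ((n : ℝ) + 1) * ((n : ℝ) - 2) ^ 2 * (3 * (n : ℝ) - 1)) * (∑ a ∈ Finset.univ.erase z, (((n : ℝ) - 1) * h z a a - (∑ b ∈ Finset.univ.erase z, h z b b)) ^ 2) + (((n : ℝ) - 1) ^ 2 * ((n : ℝ) + 1) * ((n : ℝ) - 2) ^ 3) * ((3 * (n : ℝ) - 1) * (h z z z) - 6 * (∑ b ∈ Finset.univ.erase z, h z b b)) ^ 2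
        + (4 * (3 * (n : ℝ) + 5) * ((n : ℝ) - 1) * ((n : ℝ) + 1) * ((n : ℝ) - 2) ^ 3) * (∑ b ∈ Finset.univ.erase z, h z b b) ^ 2 + (((n : ℝ) - 1) ^ 2 * ((n : ℝ) - 2) ^ 3 * (3 * (n : ℝ) - 1)) * (∑ a ∈ Finset.univ.erase z, (3 * ((n : ℝ) + 1) * h a z z - 2 * (h a a a + ∑ b ∈ (Finset.univ.erase z).erase a, h a b b)) ^ 2) + ((3 * (n : ℝ) + 5) * ((n : ℝ) - 1) ^ 3 * ((n : ℝ) - 2) * (3 * (n : ℝ) - 1)) * (∑ a ∈ Finset.univ.erase z, (((n : ℝ) - 2) * h a a a - 3 * (∑ b ∈ (Finset.univ.erase z).erase a, h a b b)) ^ 2)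
        + (3 * (3 * (n : ℝ) + 5) * ((n : ℝ) - 1) ^ 3 * ((n : ℝ) + 1) * (3 * (n : ℝ) - 1)) * (∑ a ∈ Finset.univ.erase z, ∑ b ∈ (Finset.univ.erase z).erase a, (((n : ℝ) - 2) * h a b b - ∑ b ∈ (Finset.univ.erase z).erase a, h a b b) ^ 2) + ((3 * (n : ℝ) - 5) * (3 * (n : ℝ) + 5) * ((n : ℝ) - 1) ^ 2 * ((n : ℝ) + 1) * ((n : ℝ) - 2) ^ 2 * (3 * (n : ℝ) - 1)) * (∑ a ∈ Finset.univ.erase z, ∑ b ∈ (Finset.univ.erase z).erase a, h z a b ^ 2) + ((3 * (n : ℝ) + 5) * ((n : ℝ) - 1) ^ 3 * ((n : ℝ) + 1) * ((n : ℝ) - 2) ^ 2 * (3 * (n : ℝ) - 1)) * (∑ a ∈ Finset.univ.erase z, ∑ b ∈ (Finset.univ.erase z).erase a, ∑ c ∈ ((Finset.univ.erase z).erase b).erase a, h a b c ^ 2) := by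
    refine add_nonneg (add_nonneg (add_nonneg (add_nonneg (add_nonneg (add_nonneg
      (add_nonneg ?_ ?_) ?_) ?_) ?_) ?_) ?_) ?_
    · exact mul_nonneg ce1 nn1
    · exact mul_nonneg ce2 (sq_nonneg _)
    · exact mul_nonneg ce3 (sq_nonneg _)
    · exact mul_nonneg ce4 nn4
    · exact mul_nonneg ce5 nn5
    · exact mul_nonneg ce6 nn6
    · exact mul_nonneg ce7 nn7
    · exact mul_nonneg ce8 nn8
  have hDpos : (0:ℝ) < 2 * (3 * (n : ℝ) + 5) * ((n : ℝ) - 1) ^ 3 * ((n : ℝ) + 1) * ((n : ℝ) - 2) ^ 2 * (3 * (n : ℝ) - 1) :=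
    mul_pos (mul_pos (mul_pos (mul_pos (mul_pos (by norm_num : (0:ℝ) < 2) g5)
      (pow_pos g1 3)) g3) (pow_pos g2 2)) gR
  have hQ : (0:ℝ) ≤ ((3 * (n : ℝ) - 1) * ((n : ℝ) - 2) / (2 * (3 * (n : ℝ) + 5) * ((n : ℝ) - 1))) * (∑ r, (∑ i, h r i i) ^ 2)
      - (((∑ r, (∑ i, h r i i) ^ 2) - (∑ r, ∑ i, ∑ j, h r i j ^ 2)) / 2 - 1 / ((n : ℝ) - 1) * ((∑ r, h r z z * ∑ j, h r j j) - (∑ r, ∑ j, h r z j ^ 2))) := by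
    by_contra hcon
    push_neg at hcon
    have hneg := mul_neg_of_pos_of_neg hDpos hcon
    rw [key] at hneg
    linarith
  linarith [hQ]

theorem stmt_16 (n : ℕ) (hn : 3 ≤ n) (h : Fin n → Fin n → Fin n → ℝ)
    (hsymm12 : ∀ i j k : Fin n, h i j k = h j i k)
    (hsymm23 : ∀ i j k : Fin n, h i j k = h i k j) :
    (∑ r : Fin n, ∑ i : Fin n, ∑ j : Fin n,
        if i < j then h r i i * h r j j - (h r i j) ^ 2 else 0)
      - (1 / ((n : ℝ) - 1)) *
        (∑ r : Fin n, ∑ j : Fin n, if 1 ≤ (j : ℕ) then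
            h r ⟨0, by omega⟩ ⟨0, by omega⟩ * h r j j - (h r ⟨0, by omega⟩ j) ^ 2
          else 0)
    ≤ (3 * (n : ℝ) - 1) * ((n : ℝ) - 2) / (2 * (3 * (n : ℝ) + 5) * ((n : ℝ) - 1)) *
        ∑ r : Fin n, (∑ i : Fin n, h r i i) ^ 2 := by
  exact main_aux n hn h hsymm12 hsymm23 ⟨0, by omega⟩ rfl
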